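/- For every k ∈ ℕ there is no stationary k-dependent 2-coloring of ℤ: no probability measure μ on ℤ → Fin 2 is simultaneously stationary, k-dependent, and a 2-coloring. -/

import Mathlib

open MeasureTheory ProbabilityTheory

/-- Configurations: colorings of `ℤ` with `q` colors, with the product σ-algebra. -/
abbrev Config (q : ℕ) : Type := ℤ → Fin q

/-- The left shift on configurations: `shift x n = x (n + 1)`. -/
def shift {q : ℕ} (x : Config q) : Config q := fun n => x (n + 1)

/-- A measure on configurations is stationary if it is invariant under the shift. -/
def IsShiftStationary {q : ℕ} (μ : Measure (Config q)) : Prop :=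
  μ.map shift = μ

/-- A measure on configurations is a (proper) `q`-coloring if almost surely adjacent
coordinates take different values. -/
def IsColoring {q : ℕ} (μ : Measure (Config q)) : Prop :=
  ∀ᵐ x ∂μ, ∀ n : ℤ, x n ≠ x (n + 1)

/-- The σ-algebra on configurations generated by the coordinates in `A ⊆ ℤ`. -/
def coordSigma (q : ℕ) (A : Set ℤ) : MeasurableSpace (Config q) :=
  ⨆ a ∈ A, MeasurableSpace.comap (fun x : Config q => x a) inferInstance

/-- A measure on configurations is `k`-dependent if the σ-algebras generated by the
coordinates in any two sets `A, B ⊆ ℤ` with `|a - b| > k` for all `a ∈ A`, `b ∈ B`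
are independent. -/
def KDependent {q : ℕ} (k : ℕ) (μ : Measure (Config q)) : Prop :=
  ∀ A B : Set ℤ, (∀ a ∈ A, ∀ b ∈ B, (k : ℤ) < |a - b|) →
    Indep (coordSigma q A) (coordSigma q B) μ

/-!
Let `E` be the event that the origin has color `0`. In a proper 2-coloring the colors alternate,
so `x 1 = 0` exactly when `x 0 ≠ 0`; stationarity therefore forces `μ E = μ Eᶜ = 1/2`. On the
other hand colors alternate with period `2`, so `x (2 (k + 1)) = x 0` almost surely, and
`k`-dependence makes these two coordinates independent. A random variable independent of an
almost sure copy of itself is almost surely constant, so `μ E ∈ {0, 1}`.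
-/

theorem ProbabilityTheory.IndepFun.measure_preimage_eq_zero_or_one_of_ae_eq
    {Ω β : Type*} {mΩ : MeasurableSpace Ω} {μ : Measure Ω} [IsFiniteMeasure μ]
    {mβ : MeasurableSpace β} {X Y : Ω → β} (hXY : X ⟂ᵢ[μ] Y) (h_ae : X =ᵐ[μ] Y)
    {s : Set β} (hs : MeasurableSet s) :
    μ (X ⁻¹' s) = 0 ∨ μ (X ⁻¹' s) = 1 := by
  have hXX : X ⟂ᵢ[μ] X := hXY.congr .rfl h_ae.symm
  exact measure_eq_zero_or_one_of_indep_self ((IndepFun_iff_Indep X X μ).1 hXX) ⟨s, hs, rfl⟩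

theorem Fin.two_eq_iff_ne_of_ne {a b c : Fin 2} (hab : a ≠ b) : b = c ↔ a ≠ c := by
  omega

theorem periodic_two_of_forall_ne_succ {x : ℤ → Fin 2} (hx : ∀ n, x n ≠ x (n + 1)) :
    Function.Periodic x 2 := fun n => by
  have h₀ := hx n
  have h₁ := hx (n + 1)
  rw [show n + 2 = n + 1 + 1 by ring]
  omega

theorem measurable_shift {q : ℕ} : Measurable (shift (q := q)) :=
  measurable_pi_lambda _ fun n => measurable_pi_apply (n + 1)

theorem IsShiftStationary.measure_apply_succ_mem {q : ℕ} {μ : Measure (Config q)}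
    (hstat : IsShiftStationary μ) (n : ℤ) {s : Set (Fin q)} (hs : MeasurableSet s) :
    μ {x | x (n + 1) ∈ s} = μ {x | x n ∈ s} := by
  conv_rhs => rw [← hstat]
  exact (Measure.map_apply measurable_shift (measurable_pi_apply n hs)).symm

theorem IsColoring.measure_apply_succ_eq_compl {μ : Measure (Config 2)} (hcol : IsColoring μ)
    (n : ℤ) (c : Fin 2) : μ {x | x (n + 1) = c} = μ {x | x n = c}ᶜ := by
  refine measure_congr (Filter.eventuallyEq_set.2 ?_)
  filter_upwards [hcol] with x hx using Fin.two_eq_iff_ne_of_ne (hx n)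

theorem coordSigma_singleton (q : ℕ) (a : ℤ) :
    coordSigma q {a} = MeasurableSpace.comap (fun x : Config q => x a) inferInstance :=
  iSup_iSup_eq_left

theorem KDependent.indepFun_apply {q k : ℕ} {μ : Measure (Config q)} (hdep : KDependent k μ)
    {a b : ℤ} (hab : (k : ℤ) < |a - b|) : (fun x : Config q => x a) ⟂ᵢ[μ] fun x => x b := by
  rw [IndepFun_iff_Indep, ← coordSigma_singleton, ← coordSigma_singleton]
  exact hdep {a} {b} (by simpa using hab)

/-- For every `k`, there is no stationary `k`-dependent 2-coloring of `ℤ`. -/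
theorem no_stationary_k_dependent_two_coloring (k : ℕ) (μ : Measure (Config 2))
    (hprob : IsProbabilityMeasure μ) (hstat : IsShiftStationary μ)
    (hdep : KDependent k μ) (hcol : IsColoring μ) : False := by
  set E : Set (Config 2) := {x | x 0 = 0}
  have hE : MeasurableSet E := measurable_pi_apply 0 (measurableSet_singleton 0)
  have h_shift : μ {x | x 1 = 0} = μ E :=
    hstat.measure_apply_succ_mem 0 (measurableSet_singleton 0)
  have h_alternate : μ {x | x 1 = 0} = μ Eᶜ := hcol.measure_apply_succ_eq_compl 0 0
  have h_half : μ E + μ E = 1 := by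
    calc μ E + μ E = μ E + μ Eᶜ := by rw [← h_alternate, h_shift]
    _ = 1 := prob_add_prob_compl hE
  set N : ℤ := ((k + 1 : ℕ) : ℤ) * 2
  have h_periodic : ∀ᵐ x ∂μ, x 0 = x N :=
    hcol.mono fun x hx => ((periodic_two_of_forall_ne_succ hx).nat_mul (k + 1)).eq.symm
  have h_indep : (fun x : Config 2 => x 0) ⟂ᵢ[μ] fun x => x N :=
    hdep.indepFun_apply (by rw [zero_sub, abs_neg, abs_of_nonneg (by positivity)]; omega)
  have h_zero_one : μ E = 0 ∨ μ E = 1 :=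
    h_indep.measure_preimage_eq_zero_or_one_of_ae_eq h_periodic (measurableSet_singleton 0)
  rcases h_zero_one with h | h <;> norm_num [h] at h_half
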